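/- arXiv:1907.04006 — 2 statements merged into one kernel-verified Lean document; each statement's English description precedes it below -/
import Mathlib

section
/- If a probability measure ν ≪ μ with J ν-integrable and D_KL(ν‖μ) < ∞ satisfies ∫ J dν + (1/ρ)·D_KL(ν‖μ) = −(1/ρ)·log Z, then ν equals the Gibbs measure μ⋆; that is, the minimizer of the free-energy functional is unique and equal to μ⋆. -/
open MeasureTheory Real

/-!
The Gibbs measure is the tilted measure `μ.tilted (-ρ J)`. The log-likelihood ratio of `ν`
against `μ.tilted f` is `llr ν μ - f + log ∫ exp f dμ`, so `D_KL(ν ‖ μ.tilted f)` is the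
free energy of `ν` minus its lower bound `-log ∫ exp f dμ`. Equality in the bound thus means
`D_KL(ν ‖ μ.tilted f) = 0`, and the Kullback–Leibler divergence of probability measures
vanishes only on the diagonal.
-/

/-- Kullback–Leibler divergence `D_KL(ν‖μ) = ∫ log(dν/dμ) dν`. -/
noncomputable def klDiv' {Ω : Type*} [MeasurableSpace Ω] (ν μ : Measure Ω) : ℝ :=
  ∫ x, Real.log (ν.rnDeriv μ x).toReal ∂ν

namespace MeasureTheory

open InformationTheory

variable {α : Type*} [MeasurableSpace α] {μ ν : Measure α} [IsProbabilityMeasure μ]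
  [IsProbabilityMeasure ν] {f : α → ℝ}

lemma toReal_klDiv_tilted_right (hνμ : ν ≪ μ) (hfν : Integrable f ν)
    (hfμ : Integrable (fun x ↦ exp (f x)) μ) (h_int : Integrable (llr ν μ) ν) :
    (klDiv ν (μ.tilted f)).toReal =
      ∫ x, llr ν μ x ∂ν - ∫ x, f x ∂ν + log (∫ x, exp (f x) ∂μ) := by
  have := isProbabilityMeasure_tilted hfμ
  rw [toReal_klDiv_of_measure_eq (hνμ.trans (absolutelyContinuous_tilted hfμ)) (by simp),
    integral_llr_tilted_right hνμ hfν hfμ h_int]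

lemma eq_tilted_of_integral_llr_sub_integral_eq_neg_log (hνμ : ν ≪ μ) (hfν : Integrable f ν)
    (hfμ : Integrable (fun x ↦ exp (f x)) μ) (h_int : Integrable (llr ν μ) ν)
    (h_eq : ∫ x, llr ν μ x ∂ν - ∫ x, f x ∂ν = -log (∫ x, exp (f x) ∂μ)) :
    ν = μ.tilted f := by
  have := isProbabilityMeasure_tilted hfμ
  have h_ne_top : klDiv ν (μ.tilted f) ≠ ⊤ :=
    klDiv_ne_top (hνμ.trans (absolutelyContinuous_tilted hfμ))
      (integrable_llr_tilted_right hνμ hfν h_int hfμ)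
  have h_toReal : (klDiv ν (μ.tilted f)).toReal = 0 := by
    rw [toReal_klDiv_tilted_right hνμ hfν hfμ h_int, h_eq, neg_add_cancel]
  exact klDiv_eq_zero_iff.mp ((ENNReal.toReal_eq_zero_iff _).mp h_toReal |>.resolve_right h_ne_top)

end MeasureTheory

theorem free_energy_minimizer_unique_general {Ω : Type*} [MeasurableSpace Ω]
    (μ : Measure Ω) [IsProbabilityMeasure μ]
    (J : Ω → ℝ) (ρ : ℝ) (hρ : 0 < ρ)
    (hZint : Integrable (fun x => Real.exp (-ρ * J x)) μ)
    (ν : Measure Ω) [IsProbabilityMeasure ν] (hνμ : ν ≪ μ)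
    (hJν : Integrable J ν)
    (hKL : Integrable (fun x => Real.log (ν.rnDeriv μ x).toReal) ν)
    (heq : (∫ x, J x ∂ν) + (1 / ρ) * klDiv' ν μ =
      -(1 / ρ) * Real.log (∫ x, Real.exp (-ρ * J x) ∂μ)) :
    ν = μ.withDensity
      (fun x => ENNReal.ofReal (Real.exp (-ρ * J x) / ∫ y, Real.exp (-ρ * J y) ∂μ)) := by
  refine eq_tilted_of_integral_llr_sub_integral_eq_neg_log hνμ (hJν.const_mul (-ρ)) hZint hKL ?_
  have h := congrArg (ρ * ·) heq
  simp only [mul_add, ← mul_assoc, mul_neg, mul_one_div_cancel hρ.ne', one_mul] at h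
  rw [integral_const_mul, llr_def]
  unfold klDiv' at h
  linarith

/-- Uniqueness of the minimizer of the free-energy functional: if a probability measure
`ν ≪ μ` with `J` `ν`-integrable and finite KL divergence attains the free-energy bound with
equality, then `ν` is the Gibbs measure `μ⋆` with `dμ⋆ = (exp(−ρJ)/Z) dμ`. -/
theorem free_energy_minimizer_unique {Ω : Type*} [MeasurableSpace Ω]
    (μ : Measure Ω) [IsProbabilityMeasure μ]
    (J : Ω → ℝ) (hJ : Measurable J) (ρ : ℝ) (hρ : 0 < ρ)
    (hZint : Integrable (fun x => Real.exp (-ρ * J x)) μ)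
    (hZpos : 0 < ∫ x, Real.exp (-ρ * J x) ∂μ)
    (ν : Measure Ω) [IsProbabilityMeasure ν] (hνμ : ν ≪ μ)
    (hJν : Integrable J ν)
    (hKL : Integrable (fun x => Real.log (ν.rnDeriv μ x).toReal) ν)
    (heq : (∫ x, J x ∂ν) + (1 / ρ) * klDiv' ν μ =
      -(1 / ρ) * Real.log (∫ x, Real.exp (-ρ * J x) ∂μ)) :
    ν = μ.withDensity
      (fun x => ENNReal.ofReal (Real.exp (-ρ * J x) / ∫ y, Real.exp (-ρ * J y) ∂μ)) :=
  free_energy_minimizer_unique_general μ J ρ hρ hZint ν hνμ hJν hKL heq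
end

section
/- Let H be a separable real Hilbert space with Hilbert basis (e_j)_{j∈ℕ}, let (λ_j)_{j∈ℕ} be nonnegative reals with Σ_j λ_j < ∞, let t ≥ 0, and let (ξ_j)_{j∈ℕ} be independent real-valued random variables on a probability space, each Gaussian with mean 0 and variance t. Then the partial sums S_n := Σ_{j≤n} √λ_j · ξ_j · e_j converge in L²(Ω; H) to a random variable W, and E‖W‖² = t · Σ_j λ_j. (This is the series expansion of a Q-Wiener process at a fixed time, where Q e_j = λ_j e_j is trace class.) -/
/-!
Since `(e_j)` is orthonormal, the random vectors `X_j = √λ_j ξ_j e_j` are pairwise orthogonal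
already as elements of `L²(Ω; H)`, with `‖X_j‖² = λ_j E ξ_j² = t λ_j`. An orthogonal series whose
squared norms are summable converges in a Hilbert space, and Pythagoras passes to the limit.
-/

open MeasureTheory ProbabilityTheory Filter Topology
open scoped NNReal

section Orthogonal

variable {𝕜 E ι : Type*} [RCLike 𝕜] [NormedAddCommGroup E]
  [InnerProductSpace 𝕜 E] {X : ι → E}

theorem orthogonalFamily_span_singleton (hX : Pairwise fun i j => inner 𝕜 (X i) (X j) = 0) :
    OrthogonalFamily 𝕜 (fun i => ↥(𝕜 ∙ X i)) fun i => (𝕜 ∙ X i).subtypeₗᵢ :=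
  OrthogonalFamily.of_pairwise fun i j hij =>
    (Submodule.isOrtho_span (𝕜 := 𝕜)).2 fun x hx y hy => by
      rw [Set.mem_singleton_iff.1 hx, Set.mem_singleton_iff.1 hy]; exact hX hij

theorem summable_of_pairwise_inner_eq_zero [CompleteSpace E]
    (hX : Pairwise fun i j => inner 𝕜 (X i) (X j) = 0) (hsum : Summable fun i => ‖X i‖ ^ 2) :
    Summable X :=
  ((orthogonalFamily_span_singleton hX).summable_iff_norm_sq_summable
    fun i => ⟨X i, Submodule.mem_span_singleton_self _⟩).2 hsum

theorem HasSum.norm_sq_of_pairwise_inner_eq_zero {L : E} (h : HasSum X L)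
    (hX : Pairwise fun i j => inner 𝕜 (X i) (X j) = 0) :
    HasSum (fun i => ‖X i‖ ^ 2) (‖L‖ ^ 2) := by
  have hpyth (s : Finset ι) : ‖∑ i ∈ s, X i‖ ^ 2 = ∑ i ∈ s, ‖X i‖ ^ 2 :=
    (orthogonalFamily_span_singleton hX).norm_sum
      (fun i => ⟨X i, Submodule.mem_span_singleton_self _⟩) s
  exact ((continuous_norm.pow 2).tendsto L).comp h |>.congr hpyth

end Orthogonal

namespace MeasureTheory

variable {α E : Type*} [MeasurableSpace α] {μ : Measure α}

theorem Lp.coeFn_finset_sum [NormedAddCommGroup E] {p : ENNReal} {ι : Type*} (s : Finset ι)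
    (F : ι → Lp E p μ) : ⇑(∑ i ∈ s, F i) =ᵐ[μ] ∑ i ∈ s, ⇑(F i) := by
  classical
  induction s using Finset.induction_on with
  | empty => simpa using Lp.coeFn_zero E p μ
  | insert i s hi ih =>
    simp only [Finset.sum_insert hi]
    filter_upwards [Lp.coeFn_add (F i) (∑ j ∈ s, F j), ih] with a h₁ h₂
    simp only [h₁, Pi.add_apply, h₂]

variable [NormedAddCommGroup E] [InnerProductSpace ℝ E]

theorem Lp.integral_norm_sq (F : Lp E 2 μ) : ∫ a, ‖F a‖ ^ 2 ∂μ = ‖F‖ ^ 2 := by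
  simp only [← real_inner_self_eq_norm_sq, L2.inner_def]

theorem MemLp.inner_toLp_toLp {f g : α → E} (hf : MemLp f 2 μ) (hg : MemLp g 2 μ) :
    inner ℝ (hf.toLp f) (hg.toLp g) = ∫ a, inner ℝ (f a) (g a) ∂μ := by
  rw [L2.inner_def]
  refine integral_congr_ae ?_
  filter_upwards [hf.coeFn_toLp, hg.coeFn_toLp] with a hfa hga
  rw [hfa, hga]

end MeasureTheory

namespace ProbabilityTheory

variable {Ω : Type*} [MeasurableSpace Ω] {P : Measure Ω} {ξ : Ω → ℝ} {m : ℝ} {v : ℝ≥0}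

theorem integral_sq_gaussianReal_zero : ∫ x, x ^ 2 ∂gaussianReal 0 v = v := by
  rw [← variance_of_integral_eq_zero aemeasurable_id' integral_id_gaussianReal,
    variance_fun_id_gaussianReal]

theorem aemeasurable_of_map_eq_gaussianReal (h : P.map ξ = gaussianReal m v) :
    AEMeasurable ξ P :=
  .of_map_ne_zero (h ▸ IsProbabilityMeasure.ne_zero _)

theorem memLp_of_map_eq_gaussianReal (h : P.map ξ = gaussianReal m v) {p : ENNReal}
    (hp : p ≠ ⊤) : MemLp ξ p P := by
  have hmap := memLp_id_gaussianReal' (μ := m) (v := v) p hp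
  rw [← h] at hmap
  exact (memLp_map_measure_iff aestronglyMeasurable_id
    (aemeasurable_of_map_eq_gaussianReal h)).1 hmap

theorem integral_sq_of_map_eq_gaussianReal (h : P.map ξ = gaussianReal 0 v) :
    ∫ ω, ξ ω ^ 2 ∂P = v := by
  rw [← integral_sq_gaussianReal_zero (v := v), ← h,
    integral_map (aemeasurable_of_map_eq_gaussianReal h) (by fun_prop)]

end ProbabilityTheory

section RandomSeries

variable {Ω H : Type*} [MeasurableSpace Ω] {P : Measure Ω}
  [NormedAddCommGroup H] [InnerProductSpace ℝ H] [CompleteSpace H]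

theorem Orthonormal.exists_tendsto_integral_norm_sub_sq {v : ℕ → H} (hv : Orthonormal ℝ v)
    {f : ℕ → Ω → ℝ} (hf : ∀ j, MemLp (f j) 2 P) (hsum : Summable fun j => ∫ ω, f j ω ^ 2 ∂P) :
    ∃ W : Ω → H, AEStronglyMeasurable W P ∧
      Tendsto (fun n => ∫ ω, ‖(∑ j ∈ Finset.range n, f j ω • v j) - W ω‖ ^ 2 ∂P)
        atTop (𝓝 0) ∧
      ∫ ω, ‖W ω‖ ^ 2 ∂P = ∑' j, ∫ ω, f j ω ^ 2 ∂P := by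
  have hX (j : ℕ) : MemLp (fun ω => f j ω • v j) 2 P :=
    (ContinuousLinearMap.toSpanSingleton ℝ (v j)).comp_memLp' (hf j)
  set X : ℕ → Lp H 2 P := fun j => (hX j).toLp _
  have hinner (i j : ℕ) :
      inner ℝ (X i) (X j) = (∫ ω, f i ω * f j ω ∂P) * inner ℝ (v i) (v j) := by
    rw [MemLp.inner_toLp_toLp, ← integral_mul_const]
    congr 1 with ω
    simp only [inner_smul_left, inner_smul_right, RCLike.conj_to_real]
    ring
  have horth : Pairwise fun i j => inner ℝ (X i) (X j) = 0 := fun i j hij =>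
    (hinner i j).trans (by rw [hv.2 hij, mul_zero])
  have hnorm (j : ℕ) : ‖X j‖ ^ 2 = ∫ ω, f j ω ^ 2 ∂P := by
    rw [← real_inner_self_eq_norm_sq, hinner, real_inner_self_eq_norm_sq, hv.1 j]
    simp only [sq, mul_one]
  obtain ⟨L, hL⟩ := summable_of_pairwise_inner_eq_zero horth (by simpa only [hnorm] using hsum)
  have hpartial (n : ℕ) : ∫ ω, ‖(∑ j ∈ Finset.range n, f j ω • v j) - L ω‖ ^ 2 ∂P =
      ‖∑ j ∈ Finset.range n, X j - L‖ ^ 2 := by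
    rw [← Lp.integral_norm_sq]
    refine integral_congr_ae ?_
    filter_upwards [Lp.coeFn_sub (∑ j ∈ Finset.range n, X j) L,
      Lp.coeFn_finset_sum (Finset.range n) X, ae_all_iff.2 fun j => (hX j).coeFn_toLp]
      with ω hsub hsumω hXω
    simp only [hsub, Pi.sub_apply, hsumω, Finset.sum_apply, hXω, X]
  refine ⟨L, Lp.aestronglyMeasurable L, ?_, ?_⟩
  · have h := (tendsto_iff_norm_sub_tendsto_zero.1 hL.tendsto_sum_nat).pow 2
    rw [zero_pow two_ne_zero] at h
    exact h.congr fun n => (hpartial n).symm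
  · rw [Lp.integral_norm_sq, ← (hL.norm_sq_of_pairwise_inner_eq_zero horth).tsum_eq]
    simp only [hnorm]

end RandomSeries

theorem qWiener_series_convergence_general
    {H : Type*} [NormedAddCommGroup H] [InnerProductSpace ℝ H] [CompleteSpace H]
    {Ω : Type*} [MeasurableSpace Ω] (P : Measure Ω)
    (e : HilbertBasis ℕ ℝ H)
    (lam : ℕ → ℝ) (hlam : ∀ j, 0 ≤ lam j) (hsum : Summable lam)
    (t : ℝ≥0)
    (ξ : ℕ → Ω → ℝ)
    (hgauss : ∀ j, Measure.map (ξ j) P = gaussianReal 0 t) :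
    ∃ W : Ω → H, AEStronglyMeasurable W P ∧
      Tendsto (fun n => ∫ ω,
          ‖(∑ j ∈ Finset.range n, (Real.sqrt (lam j) * ξ j ω) • (e j : H)) - W ω‖ ^ 2 ∂P)
        atTop (nhds 0) ∧
      ∫ ω, ‖W ω‖ ^ 2 ∂P = (t : ℝ) * ∑' j, lam j := by
  have hcoeff (j : ℕ) : ∫ ω, (Real.sqrt (lam j) * ξ j ω) ^ 2 ∂P = t * lam j := by
    simp_rw [mul_pow, Real.sq_sqrt (hlam j)]
    rw [integral_const_mul, integral_sq_of_map_eq_gaussianReal (hgauss j), mul_comm]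
  obtain ⟨W, hW, hlim, hnorm⟩ := e.orthonormal.exists_tendsto_integral_norm_sub_sq
    (fun j => (memLp_of_map_eq_gaussianReal (hgauss j) ENNReal.ofNat_ne_top).const_mul
      (Real.sqrt (lam j)))
    (by simpa only [hcoeff] using hsum.mul_left (t : ℝ))
  exact ⟨W, hW, hlim, by rw [hnorm, ← tsum_mul_left, tsum_congr hcoeff]⟩

/-- Series expansion of a Q-Wiener process at a fixed time: if `(e_j)` is a Hilbert basis
of a separable Hilbert space `H`, `(λ_j)` are nonnegative summable reals (the eigenvalues
of the trace-class covariance `Q`), and `(ξ_j)` are independent real Gaussians with mean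
`0` and variance `t`, then the partial sums `S_n = Σ_{j<n} √λ_j · ξ_j · e_j` converge in
`L²(Ω; H)` to some `W` with `E‖W‖² = t · Σ_j λ_j`. -/
theorem qWiener_series_convergence
    {H : Type*} [NormedAddCommGroup H] [InnerProductSpace ℝ H] [CompleteSpace H]
    [SecondCountableTopology H]
    {Ω : Type*} [MeasurableSpace Ω] (P : Measure Ω) [IsProbabilityMeasure P]
    (e : HilbertBasis ℕ ℝ H)
    (lam : ℕ → ℝ) (hlam : ∀ j, 0 ≤ lam j) (hsum : Summable lam)
    (t : ℝ≥0)
    (ξ : ℕ → Ω → ℝ) (hmeas : ∀ j, Measurable (ξ j))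
    (hindep : iIndepFun ξ P)
    (hgauss : ∀ j, Measure.map (ξ j) P = gaussianReal 0 t) :
    ∃ W : Ω → H, AEStronglyMeasurable W P ∧
      Tendsto (fun n => ∫ ω,
          ‖(∑ j ∈ Finset.range n, (Real.sqrt (lam j) * ξ j ω) • (e j : H)) - W ω‖ ^ 2 ∂P)
        atTop (nhds 0) ∧
      ∫ ω, ‖W ω‖ ^ 2 ∂P = (t : ℝ) * ∑' j, lam j :=
  qWiener_series_convergence_general P e lam hlam hsum t ξ hgauss
end
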